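/- arXiv:2601.11392 — 3 statements merged into one kernel-verified Lean document; each statement's English description precedes it below -/
import Mathlib

section
/- Let ω : ℝ → ℝ be smooth, compactly supported and even with ω(0) = 0 and ∫_ℝ ω(x) dx = 2. Then for every A > 0 there is C > 0 (depending only on A and ω) such that for every real Q ≥ 1 and every n ∈ ℤ: |𝟙[n = 0] − Q^{−1} Σ_{q≥1} (ω(q/Q) − ω(n/(qQ))) 𝟙[q | n]| ≤ C Q^{−A}. -/
open scoped Classical

noncomputable section

open MeasureTheory FourierTransform Filter Asymptotics
open scoped Real



lemma aux_decay (ω : ℝ → ℝ) (hs : ContDiff ℝ (⊤ : ℕ∞) ω) (hc : HasCompactSupport ω) (k : ℕ) :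
    ∃ C : ℝ, 0 ≤ C ∧ ∀ ξ : ℝ, |ξ| ^ k * ‖𝓕 (fun x => (ω x : ℂ)) ξ‖ ≤ C := by
  set φ : ℝ → ℂ := fun x => (ω x : ℂ) with hφ
  have hφs : ContDiff ℝ (⊤ : ℕ∞) φ := Complex.ofRealCLM.contDiff.comp hs
  have hφc : HasCompactSupport φ :=
    hc.comp_left (g := fun x : ℝ => (x : ℂ)) (by simp)
  have hder : ∀ m : ℕ, HasCompactSupport (iteratedDeriv m φ) := by
    intro m
    have : iteratedDeriv m φ =
        (fun L : ContinuousMultilinearMap ℝ (fun _ : Fin m => ℝ) ℂ => L (fun _ => 1)) ∘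
          iteratedFDeriv ℝ m φ := by
      funext x; simp [iteratedDeriv_eq_iteratedFDeriv, Function.comp]
    rw [this]
    exact (hφc.iteratedFDeriv m).comp_left (by simp)
  have hcont : ∀ m : ℕ, Continuous (iteratedDeriv m φ) := by
    intro m
    exact (contDiff_iff_iteratedDeriv.mp (hφs.of_le (by simp))).1 m le_top
  have hint : ∀ m : ℕ, (m : ℕ∞) ≤ (⊤ : ℕ∞) → Integrable (iteratedDeriv m φ) := fun m _ =>
    (hcont m).integrable_of_hasCompactSupport (hder m)
  have key := Real.fourier_iteratedDeriv (N := (⊤ : ℕ∞)) (n := k)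
    (hφs.of_le (by simp)) hint le_top
  set M : ℝ := ∫ x, ‖iteratedDeriv k φ x‖ with hM
  have hM0 : 0 ≤ M := integral_nonneg fun x => norm_nonneg _
  refine ⟨M, hM0, fun ξ => ?_⟩
  have h1 : ‖𝓕 (iteratedDeriv k φ) ξ‖ ≤ M :=
    VectorFourier.norm_fourierIntegral_le_integral_norm _ _ _ _ _
  rw [key] at h1
  have h2 : ‖(2 * ↑π * Complex.I * (ξ:ℂ)) ^ k • 𝓕 φ ξ‖
      = (2 * π * |ξ|) ^ k * ‖𝓕 φ ξ‖ := by
    rw [norm_smul, norm_pow]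
    congr 2
    simp [map_mul, Complex.norm_real, Complex.norm_I,
      abs_of_nonneg Real.pi_pos.le]
  rw [h2] at h1
  have h3 : |ξ| ^ k * ‖𝓕 φ ξ‖ ≤ (2 * π * |ξ|) ^ k * ‖𝓕 φ ξ‖ := by
    apply mul_le_mul_of_nonneg_right _ (norm_nonneg _)
    apply pow_le_pow_left₀ (abs_nonneg _)
    nlinarith [Real.pi_gt_three, abs_nonneg ξ]
  linarith



lemma aux_scale (ω : ℝ → ℝ) {Q : ℝ} (hQ : 0 < Q) (ξ : ℝ) :
    𝓕 (fun x => ((ω (x / Q) : ℂ))) ξ = (Q : ℂ) * 𝓕 (fun x => (ω x : ℂ)) (Q * ξ) := by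
  rw [Real.fourier_real_eq_integral_exp_smul,
    Real.fourier_real_eq_integral_exp_smul]
  have h1 : ∀ v : ℝ, Complex.exp (↑(-2 * π * v * ξ) * Complex.I) • ((ω (v / Q) : ℂ))
      = (fun y => Complex.exp (↑(-2 * π * y * (Q * ξ)) * Complex.I) • ((ω y : ℂ))) (v / Q) := by
    intro v
    have h2 : -2 * π * (v / Q) * (Q * ξ) = -2 * π * v * ξ := by
      field_simp
    simp only [h2]
  simp_rw [h1]
  rw [MeasureTheory.Measure.integral_comp_div
    (fun y => Complex.exp (↑(-2 * π * y * (Q * ξ)) * Complex.I) • ((ω y : ℂ))) Q,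
    abs_of_pos hQ]
  simp [Complex.real_smul]

lemma aux_main (ω : ℝ → ℝ)
    (hs : ContDiff ℝ (⊤ : ℕ∞) ω) (hc : HasCompactSupport ω)
    (heven : ∀ x, ω (-x) = ω x) (hzero : ω 0 = 0)
    (hint : ∫ x, ω x = 2) (k : ℕ) (hk : 2 ≤ k) :
    ∃ C : ℝ, 0 ≤ C ∧ ∀ Q : ℝ, 1 ≤ Q →
      |1 - Q⁻¹ * ∑' q : ℕ, (if 1 ≤ q then ω ((q : ℝ) / Q) else 0)| ≤ C / Q ^ k := by
  classical
  obtain ⟨C2, hC20, hC2⟩ := aux_decay ω hs hc 2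
  obtain ⟨Ck, hCk0, hCk⟩ := aux_decay ω hs hc k
  set φ : ℝ → ℂ := fun x => (ω x : ℂ) with hφdef
  set W : ℤ → ℝ := fun m => if m = 0 then 0 else (|(m : ℝ)| ^ 2)⁻¹ with hWdef
  have habs2 : ∀ m : ℤ, m ≠ 0 → (1 : ℝ) ≤ |(m : ℝ)| := by
    intro m hm
    have : (1 : ℤ) ≤ |m| := Int.one_le_abs (by omega)
    calc (1:ℝ) ≤ ((|m| : ℤ) : ℝ) := by exact_mod_cast this
    _ = |(m:ℝ)| := by push_cast; rfl
  have hrpow2 : ∀ x : ℝ, 1 ≤ |x| → |x| ^ (-2 : ℝ) = (|x| ^ 2)⁻¹ := by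
    intro x _
    rw [show (-2 : ℝ) = -((2:ℕ):ℝ) by norm_num, Real.rpow_neg (abs_nonneg _),
      Real.rpow_natCast]
  have hW_le : ∀ m : ℤ, W m ≤ |(m : ℝ)| ^ (-2 : ℝ) := by
    intro m
    by_cases hm : m = 0
    · simp [hWdef, hm, Real.zero_rpow (by norm_num : (-2:ℝ) ≠ 0)]
    · rw [hWdef]
      simp only [if_neg hm]
      rw [hrpow2 _ (habs2 m hm)]
  have hW_nonneg : ∀ m : ℤ, 0 ≤ W m := by
    intro m; rw [hWdef]; dsimp only; split <;> positivity
  have hWsum : Summable W :=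
    Summable.of_nonneg_of_le hW_nonneg hW_le (Real.summable_abs_int_rpow one_lt_two)
  set T : ℝ := ∑' m : ℤ, W m with hTdef
  have hT0 : 0 ≤ T := tsum_nonneg hW_nonneg
  refine ⟨Ck * T / 2, by positivity, fun Q hQ => ?_⟩
  have hQ0 : (0 : ℝ) < Q := lt_of_lt_of_le one_pos hQ
  set f : ℝ → ℂ := fun x => φ (x / Q) with hfdef
  obtain ⟨R, hR0, hR⟩ := hc.exists_pos_le_norm
  -- continuity
  have hf_cont : Continuous f :=
    Complex.continuous_ofReal.comp (hs.continuous.comp (continuous_id.div_const Q))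
  -- f is eventually zero
  have hev : f =ᶠ[cocompact ℝ] 0 := by
    have hmem : (Metric.closedBall (0:ℝ) (R * Q))ᶜ ∈ cocompact ℝ :=
      mem_cocompact.mpr ⟨_, isCompact_closedBall 0 (R * Q), subset_rfl⟩
    filter_upwards [hmem] with x hx
    simp only [Set.mem_compl_iff, Metric.mem_closedBall, Real.dist_eq, sub_zero, not_le] at hx
    have hx' : R ≤ ‖x / Q‖ := by
      rw [Real.norm_eq_abs, abs_div, abs_of_pos hQ0, le_div_iff₀ hQ0]
      nlinarith [le_abs_self x, neg_abs_le x]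
    simp [hfdef, hφdef, hR _ hx']
  have hf_O : f =O[cocompact ℝ] (|·| ^ (-2 : ℝ)) :=
    hev.trans_isBigO (isBigO_zero _ _)
  have hscale : ∀ ξ : ℝ, 𝓕 f ξ = (Q : ℂ) * 𝓕 φ (Q * ξ) := fun ξ => aux_scale ω hQ0 ξ
  have hFnorm : ∀ ξ : ℝ, ‖𝓕 f ξ‖ = Q * ‖𝓕 φ (Q * ξ)‖ := by
    intro ξ
    rw [hscale ξ, norm_mul, Complex.norm_real, Real.norm_eq_abs, abs_of_pos hQ0]
  -- Fourier transform decay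
  have h𝓕φ_le : ∀ (j : ℕ) (Cj : ℝ), (∀ ξ : ℝ, |ξ| ^ j * ‖𝓕 φ ξ‖ ≤ Cj) →
      ∀ m : ℝ, 1 ≤ |m| → ‖𝓕 f m‖ ≤ Q * Cj / (Q * |m|) ^ j := by
    intro j Cj hCj m hm
    rw [hFnorm]
    have h1 : |Q * m| = Q * |m| := by rw [abs_mul, abs_of_pos hQ0]
    have h2 := hCj (Q * m)
    rw [h1] at h2
    have hpos : (0:ℝ) < (Q * |m|) ^ j := by positivity
    rw [le_div_iff₀ hpos]
    nlinarith [mul_le_mul_of_nonneg_left h2 hQ0.le, norm_nonneg (𝓕 φ (Q * m))]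
  -- big-O of the Fourier transform
  have hFf_O : (𝓕 f) =O[cocompact ℝ] (|·| ^ (-2 : ℝ)) := by
    rw [isBigO_iff]
    refine ⟨C2, ?_⟩
    have hmem : (Metric.closedBall (0:ℝ) 1)ᶜ ∈ cocompact ℝ :=
      mem_cocompact.mpr ⟨_, isCompact_closedBall 0 1, subset_rfl⟩
    filter_upwards [hmem] with ξ hξ
    simp only [Set.mem_compl_iff, Metric.mem_closedBall, Real.dist_eq, sub_zero, not_le] at hξ
    have hξ1 : (1:ℝ) ≤ |ξ| := hξ.le
    have h1 : ‖𝓕 f ξ‖ ≤ Q * C2 / (Q * |ξ|) ^ 2 := h𝓕φ_le 2 C2 hC2 ξ hξ1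
    have h2 : Q * C2 / (Q * |ξ|) ^ 2 ≤ C2 * (|ξ| ^ 2)⁻¹ := by
      rw [div_le_iff₀ (by positivity)]
      have hane : |ξ| ≠ 0 := by positivity
      have hC2' : C2 * (|ξ|^2)⁻¹ * (Q * |ξ|)^2 = C2 * Q^2 := by
        have e := mul_inv_cancel₀ (pow_ne_zero 2 hane)
        calc C2 * (|ξ|^2)⁻¹ * (Q * |ξ|)^2 = C2 * Q^2 * (|ξ|^2 * (|ξ|^2)⁻¹) := by ring
        _ = C2 * Q^2 := by rw [e, mul_one]
      rw [hC2']
      nlinarith [mul_nonneg (mul_nonneg hC20 hQ0.le) (sub_nonneg.mpr hQ)]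
    rw [Real.norm_eq_abs (|ξ| ^ (-2:ℝ)), abs_of_nonneg (Real.rpow_nonneg (abs_nonneg _) _),
      hrpow2 _ hξ1]
    linarith
  -- summability of the Fourier side
  have hsumF : Summable fun m : ℤ => 𝓕 f m :=
    summable_of_isBigO (Real.summable_abs_int_rpow one_lt_two)
      (hFf_O.comp_tendsto Int.tendsto_coe_cofinite)
  -- Poisson summation
  have hpoisson := Real.tsum_eq_tsum_fourier_of_rpow_decay hf_cont one_lt_two
    hf_O hFf_O 0
  simp only [zero_add, QuotientAddGroup.mk_zero, fourier_eval_zero, mul_one] at hpoisson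
  -- the integer-indexed function
  set u : ℤ → ℝ := fun m => ω ((m : ℝ) / Q) with hudef
  set M : ℤ := ⌈R * Q⌉ with hMdef
  have hu0 : ∀ m : ℤ, m ∉ Finset.Icc (-M) M → u m = 0 := by
    intro m hm
    apply hR
    rw [Real.norm_eq_abs, abs_div, abs_of_pos hQ0, le_div_iff₀ hQ0]
    simp only [Finset.mem_Icc, not_and_or, not_le] at hm
    have h1 : (M : ℝ) < |(m : ℝ)| := by
      have : M < |m| := by
        rcases hm with h | h
        · exact lt_abs.mpr (Or.inr (by omega))
        · exact lt_abs.mpr (Or.inl h)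
      calc (M:ℝ) < ((|m| : ℤ) : ℝ) := by exact_mod_cast this
      _ = |(m:ℝ)| := by push_cast; rfl
    have h2 : R * Q ≤ (M : ℝ) := Int.le_ceil _
    linarith
  have hu_sum : Summable u := summable_of_ne_finset_zero hu0
  have hu_nat : Summable fun n : ℕ => u n :=
    hu_sum.comp_injective (fun a b h => by exact_mod_cast h)
  have hu_neg : Summable fun n : ℕ => u (-((n : ℤ) + 1)) :=
    hu_sum.comp_injective (fun a b h => by omega)
  set S : ℝ := ∑' n : ℕ, u n with hSdef
  have hLHS : ∑' m : ℤ, f m = ((S + S : ℝ) : ℂ) := by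
    have e1 : ∀ m : ℤ, f m = ((u m : ℝ) : ℂ) := fun m => rfl
    calc ∑' m : ℤ, f m = ∑' m : ℤ, ((u m : ℝ) : ℂ) := rfl
    _ = ((∑' m : ℤ, u m : ℝ) : ℂ) := (Complex.ofReal_tsum _).symm
    _ = ((S + S : ℝ) : ℂ) := by
        have e2 : (∑' n : ℕ, u (-((n : ℤ) + 1))) = ∑' n : ℕ, u ((n : ℤ) + 1) := by
          apply tsum_congr
          intro n
          have h7 : (((-((n:ℤ) + 1)) : ℤ) : ℝ) = -(((((n:ℤ) + 1) : ℤ) : ℝ)) := by push_cast; ring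
          show ω _ = ω _
          rw [h7, neg_div, heven]
        have e5 : (∑' n : ℕ, u ((n : ℤ) + 1)) = ∑' n : ℕ, u (((n + 1 : ℕ) : ℤ)) := by
          apply tsum_congr
          intro n
          norm_num
        have e3 := Summable.tsum_eq_zero_add hu_nat
        have e4 : u (((0:ℕ) : ℤ)) = 0 := by
          show ω _ = 0
          norm_num [hzero]
        have e6 : (∑' n : ℕ, u (((n + 1 : ℕ) : ℤ))) = S := by
          rw [hSdef, e3, e4, zero_add]
        congr 1
        rw [tsum_of_nat_of_neg_add_one hu_nat hu_neg, e2, e5, e6, ← hSdef]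
  -- the Fourier side
  set E : ℂ := ∑' m : ℤ, if m = 0 then 0 else 𝓕 f m with hEdef
  have hF0 : 𝓕 f 0 = ((2 * Q : ℝ) : ℂ) := by
    rw [hscale 0, mul_zero]
    have : 𝓕 φ 0 = 2 := by
      rw [Real.fourier_real_eq_integral_exp_smul]
      simp only [mul_zero, Complex.ofReal_zero, zero_mul, Complex.exp_zero, one_smul]
      have hωint : Integrable ω := hs.continuous.integrable_of_hasCompactSupport hc
      have h8 : ∫ (v : ℝ), Complex.ofRealCLM (ω v) = Complex.ofRealCLM (∫ v, ω v) :=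
        ContinuousLinearMap.integral_comp_comm _ hωint
      simp only [Complex.ofRealCLM_apply] at h8
      show ∫ (v : ℝ), ((ω v : ℝ) : ℂ) = 2
      rw [h8, hint]
      norm_num
    rw [this]
    push_cast
    ring
  have hRHS : ∑' m : ℤ, 𝓕 f m = ((2 * Q : ℝ) : ℂ) + E := by
    rw [Summable.tsum_eq_add_tsum_ite hsumF 0]
    simp only [Int.cast_zero]
    rw [hF0, hEdef]
  have hE : E = ((S + S - 2 * Q : ℝ) : ℂ) := by
    have h5 := hpoisson
    rw [hLHS, hRHS] at h5
    push_cast at h5 ⊢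
    linear_combination -h5
  -- bound each term of E
  have hbound : ∀ m : ℤ, ‖(if m = 0 then (0:ℂ) else 𝓕 f m)‖ ≤ (Ck * Q / Q ^ k) * W m := by
    intro m
    by_cases hm : m = 0
    · simp [hm, hWdef]
    · rw [if_neg hm, hWdef]
      simp only [if_neg hm]
      have hm1 : (1:ℝ) ≤ |(m:ℝ)| := habs2 m hm
      have h1 : ‖𝓕 f m‖ ≤ Q * Ck / (Q * |(m:ℝ)|) ^ k := h𝓕φ_le k Ck hCk m hm1
      have h2 : Q * Ck / (Q * |(m:ℝ)|) ^ k ≤ Ck * Q / Q ^ k * (|(m:ℝ)| ^ 2)⁻¹ := by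
        rw [div_le_iff₀ (by positivity)]
        have e1 : Ck * Q / Q ^ k * (|(m:ℝ)| ^ 2)⁻¹ * (Q * |(m:ℝ)|) ^ k
            = Ck * Q * (|(m:ℝ)| ^ k / |(m:ℝ)| ^ 2) := by
          rw [mul_pow]
          field_simp
        rw [e1]
        have e2 : (1:ℝ) ≤ |(m:ℝ)| ^ k / |(m:ℝ)| ^ 2 := by
          rw [le_div_iff₀ (by positivity), one_mul]
          exact pow_le_pow_right₀ hm1 hk
        nlinarith [mul_le_mul_of_nonneg_left e2 (mul_nonneg hCk0 hQ0.le)]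
      linarith
  have hsumW' : Summable fun m : ℤ => (Ck * Q / Q ^ k) * W m := hWsum.mul_left _
  have hsumnorm : Summable fun m : ℤ => ‖(if m = 0 then (0:ℂ) else 𝓕 f m)‖ :=
    Summable.of_nonneg_of_le (fun m => norm_nonneg _) hbound hsumW'
  have hEnorm : ‖E‖ ≤ (Ck * Q / Q ^ k) * T := by
    calc ‖E‖ ≤ ∑' m : ℤ, ‖(if m = 0 then (0:ℂ) else 𝓕 f m)‖ := norm_tsum_le_tsum_norm hsumnorm
    _ ≤ ∑' m : ℤ, (Ck * Q / Q ^ k) * W m := Summable.tsum_le_tsum hbound hsumnorm hsumW'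
    _ = (Ck * Q / Q ^ k) * T := by rw [tsum_mul_left]
  -- conclude
  have hEnorm' : |S + S - 2 * Q| ≤ (Ck * Q / Q ^ k) * T := by
    rw [hE] at hEnorm
    rwa [Complex.norm_real, Real.norm_eq_abs] at hEnorm
  have hmul : (1 - Q⁻¹ * S) * (2 * Q) = -(S + S - 2 * Q) := by
    field_simp
    ring
  have hfinal : |1 - Q⁻¹ * S| = |S + S - 2 * Q| / (2 * Q) := by
    rw [eq_div_iff (by positivity : (2:ℝ) * Q ≠ 0)]
    calc |1 - Q⁻¹ * S| * (2 * Q) = |(1 - Q⁻¹ * S) * (2 * Q)| := by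
          rw [abs_mul, abs_of_pos (by positivity : (0:ℝ) < 2 * Q)]
    _ = |-(S + S - 2 * Q)| := by rw [hmul]
    _ = |S + S - 2 * Q| := abs_neg _
  have hSeq : ∑' (q : ℕ), (if 1 ≤ q then ω ((q : ℝ) / Q) else 0) = S := by
    rw [hSdef]
    apply tsum_congr
    intro q
    rcases Nat.eq_zero_or_pos q with h | h
    · subst h
      show (0:ℝ) = ω _
      norm_num [hzero]
    · rw [if_pos (by omega : 1 ≤ q)]
      show ω _ = ω _
      norm_cast
  rw [hSeq, hfinal]
  rw [div_le_div_iff₀ (by positivity) (by positivity)]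
  calc |S + S - 2*Q| * Q ^ k ≤ ((Ck * Q / Q ^ k) * T) * Q ^ k :=
        mul_le_mul_of_nonneg_right hEnorm' (by positivity)
  _ = Ck * T / 2 * (2 * Q) := by field_simp


/-- **one-dimensional δ-method.** Let `ω : ℝ → ℝ` be smooth, compactly supported
and even with `ω(0) = 0` and `∫ ω = 2`. For every `A > 0` there is `C > 0` such that for every
`Q ≥ 1` and `n ∈ ℤ`:
`|𝟙[n = 0] − Q⁻¹ ∑_{q≥1} (ω(q/Q) − ω(n/(qQ))) 𝟙[q ∣ n]| ≤ C Q^{−A}`. -/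

theorem delta_method_one_dim (ω : ℝ → ℝ)
    (hs : ContDiff ℝ (⊤ : ℕ∞) ω) (hc : HasCompactSupport ω)
    (heven : ∀ x, ω (-x) = ω x) (hzero : ω 0 = 0)
    (hint : ∫ x, ω x = 2) :
    ∀ A > (0:ℝ), ∃ C > (0:ℝ), ∀ Q : ℝ, 1 ≤ Q → ∀ n : ℤ,
      |(if n = 0 then (1:ℝ) else 0) -
          Q⁻¹ * ∑' q : ℕ,
            (if 1 ≤ q ∧ (q : ℤ) ∣ n then ω ((q : ℝ) / Q) - ω ((n : ℝ) / ((q : ℝ) * Q)) else 0)|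
        ≤ C * Q ^ (-A) := by
  intro A hA
  set k : ℕ := ⌈A⌉₊ + 2 with hk
  obtain ⟨C0, hC00, hC0⟩ := aux_main ω hs hc heven hzero hint k (by omega)
  refine ⟨C0 + 1, by positivity, fun Q hQ n => ?_⟩
  have hQ0 : (0:ℝ) < Q := lt_of_lt_of_le one_pos hQ
  have hQA : (0:ℝ) < Q ^ (-A) := Real.rpow_pos_of_pos hQ0 _
  by_cases hn : n = 0
  · subst hn
    have h9 := hC0 Q hQ
    have h10 : ∑' q : ℕ, (if 1 ≤ q ∧ (q : ℤ) ∣ (0:ℤ) then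
          ω ((q:ℝ)/Q) - ω ((((0:ℤ)):ℝ)/((q:ℝ)*Q)) else 0)
        = ∑' q : ℕ, (if 1 ≤ q then ω ((q:ℝ)/Q) else 0) := by
      apply tsum_congr
      intro q
      by_cases h1 : 1 ≤ q
      · rw [if_pos ⟨h1, dvd_zero _⟩, if_pos h1]
        norm_num [hzero]
      · rw [if_neg (fun hh => h1 hh.1), if_neg h1]
    rw [if_pos rfl, h10]
    refine h9.trans ?_
    have hAk : A ≤ (k:ℝ) := by
      have h13 := Nat.le_ceil A
      rw [hk]
      push_cast
      linarith
    have h11 : Q ^ (-(k:ℝ)) ≤ Q ^ (-A) :=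
      Real.rpow_le_rpow_of_exponent_le hQ (by linarith)
    have h12 : C0 / Q ^ k = C0 * Q ^ (-(k:ℝ)) := by
      rw [Real.rpow_neg hQ0.le, Real.rpow_natCast]
      ring
    rw [h12]
    have h14 := mul_le_mul_of_nonneg_left h11 hC00
    nlinarith
  · rw [if_neg hn]
    set N := n.natAbs with hN
    have hN0 : N ≠ 0 := Int.natAbs_ne_zero.mpr hn
    have hz : ∀ q : ℕ, q ∉ N.divisors →
        (if 1 ≤ q ∧ (q:ℤ) ∣ n then ω ((q:ℝ)/Q) - ω ((n:ℝ)/((q:ℝ)*Q)) else 0) = 0 := by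
      intro q hq
      rw [if_neg]
      rintro ⟨h1, h2⟩
      apply hq
      rw [Nat.mem_divisors]
      refine ⟨?_, hN0⟩
      have h3 : (q:ℤ) ∣ (N:ℤ) := Int.dvd_natAbs.mpr h2
      exact_mod_cast h3
    rw [tsum_eq_sum hz]
    have habsx : ∀ x : ℝ, ω |x| = ω x := by
      intro x
      rcases abs_cases x with ⟨h,_⟩|⟨h,_⟩
      · rw [h]
      · rw [h, heven]
    have hNabs : ((N:ℕ):ℝ) = |((n:ℤ):ℝ)| := by
      rw [hN, Nat.cast_natAbs, Int.cast_abs]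
    have hterm : ∀ q ∈ N.divisors,
        (if 1 ≤ q ∧ (q:ℤ) ∣ n then ω ((q:ℝ)/Q) - ω ((n:ℝ)/((q:ℝ)*Q)) else 0)
        = ω ((q:ℝ)/Q) - ω (((N / q : ℕ) : ℝ)/Q) := by
      intro q hq
      obtain ⟨hdvd, _⟩ := Nat.mem_divisors.mp hq
      have hqpos : 0 < q := Nat.pos_of_mem_divisors hq
      have hdvd' : (q:ℤ) ∣ n := Int.dvd_natAbs.mp (by exact_mod_cast hdvd)
      rw [if_pos ⟨hqpos, hdvd'⟩]
      congr 1
      have hqQ : (0:ℝ) < (q:ℝ) * Q := by positivity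
      calc ω ((n:ℝ)/((q:ℝ)*Q)) = ω |(n:ℝ)/((q:ℝ)*Q)| := (habsx _).symm
      _ = ω ((N:ℝ)/((q:ℝ)*Q)) := by rw [abs_div, abs_of_pos hqQ, ← hNabs]
      _ = ω (((N / q : ℕ) : ℝ)/Q) := by
          rw [Nat.cast_div hdvd (by exact_mod_cast hqpos.ne' : ((q:ℕ):ℝ) ≠ 0), div_div]
    rw [Finset.sum_congr rfl hterm, Finset.sum_sub_distrib]
    have h15 : ∑ q ∈ N.divisors, ω (((N / q : ℕ) : ℝ)/Q) = ∑ q ∈ N.divisors, ω ((q:ℝ)/Q) :=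
      Nat.sum_div_divisors N (fun d => ω ((d:ℝ)/Q))
    rw [h15, sub_self, mul_zero, zero_sub, abs_neg, abs_zero]
    positivity

end
end

section
/- There is an absolute constant C > 0 such that the following holds. Let f ∈ ℤ[X] have degree 3 and let p be a prime that does not divide all of the coefficients of f. Then for every integer k ≥ 1, #{x ∈ ℤ/p^kℤ : f(x) ≡ 0 (mod p^k)} ≤ C (k+1)^{k−1} gcd(p^k, Disc(f))^{2/3}. -/
/-!
Write `N_k(P)` for the number of roots of a cubic `P` modulo `p ^ k`. For `P` nonzero modulo `p`
we show `N_k(P) ^ 3 ≤ 27 ^ k * gcd(p ^ k, Disc P) ^ 2` by induction on `k`; since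
`3 ^ k ≤ 3 (k + 1) ^ (k - 1)`, the theorem follows with `C = 3`.

Every root modulo `p ^ (k + 1)` lies over one of the at most three roots `r` of `P` modulo `p`.
With `T(X) = P(X + r)`, the lifts of `r` are the `y` modulo `p ^ k` with `p ^ (k + 1) ∣ T(p y)`.
If `p ∤ T'(0)` there is at most one lift, and if `p ∣ T'(0)` but `p ^ 2 ∤ T(0)` there is none.
Otherwise `T(p Y) = p ^ m Q(Y)` with `Q` nonzero modulo `p` and `m ∈ {2, 3}`: the number of lifts is
`p ^ (m - 1) N_(k + 1 - m)(Q)` and `Disc P = p ^ (4 m - 6) Disc Q`, so the power of `p` gained in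
the count is paid for by the gcd.
-/

noncomputable section

open Polynomial Finset

theorem Nat.count_mul_of_periodic {p : ℕ → Prop} [DecidablePred p] {m : ℕ}
    (hp : Function.Periodic p m) (u : ℕ) : Nat.count p (u * m) = u * Nat.count p m := by
  induction u with
  | zero => simp
  | succ u ih =>
    have hshift (k : ℕ) : p (u * m + k) ↔ p k := by
      rw [add_comm, ← Nat.cast_id u]; exact iff_of_eq (hp.nat_mul u k)
    rw [add_one_mul, Nat.count_add, ih]
    simp only [hshift, add_one_mul]

theorem Nat.count_mul_eq_sum (p : ℕ → Prop) [DecidablePred p] (q n : ℕ) :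
    Nat.count p (q * n) = ∑ r ∈ range q, Nat.count (fun y => p (q * y + r)) n := by
  induction n with
  | zero => simp
  | succ n ih =>
    rw [Nat.mul_succ, Nat.count_add, ih]
    simp only [Nat.count_succ, sum_add_distrib, Nat.count_eq_card_filter_range, card_filter]

theorem Int.ModEq.eval (f : ℤ[X]) {a b n : ℤ} (h : a ≡ b [ZMOD n]) :
    f.eval a ≡ f.eval b [ZMOD n] :=
  Int.modEq_iff_dvd.mpr ((Int.modEq_iff_dvd.mp h).trans (sub_dvd_eval_sub b a f))

def countDvd (f : ℤ → ℤ) (m n : ℕ) : ℕ := Nat.count (fun x : ℕ => (m : ℤ) ∣ f x) n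

theorem countDvd_mul_eval (f : ℤ[X]) (u m : ℕ) :
    countDvd f.eval m (u * m) = u * countDvd f.eval m m := by
  refine Nat.count_mul_of_periodic (fun x => propext ?_) u
  refine ((Int.modEq_iff_dvd.mpr ?_).eval f).dvd_iff.symm
  simp

theorem countDvd_const_mul (f : ℤ → ℤ) {c : ℕ} (hc : c ≠ 0) (m n : ℕ) :
    countDvd (fun x => c * f x) (c * m) n = countDvd f m n := by
  simp only [countDvd, Nat.cast_mul, mul_dvd_mul_iff_left (Int.natCast_ne_zero.mpr hc)]

theorem countDvd_pow_succ_eq_sum (f : ℤ[X]) (q k : ℕ) :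
    countDvd f.eval (q ^ (k + 1)) (q ^ (k + 1)) =
      ∑ r ∈ (range q).filter (fun r : ℕ => (q : ℤ) ∣ f.eval r),
        countDvd (fun y => f.eval (q * y + r)) (q ^ (k + 1)) (q ^ k) := by
  have h := Nat.count_mul_eq_sum (fun x : ℕ => ((q ^ (k + 1) : ℕ) : ℤ) ∣ f.eval x) q (q ^ k)
  rw [← pow_succ'] at h
  rw [sum_filter, countDvd, h]
  refine sum_congr rfl fun r _ => ?_
  split_ifs with hr
  · simp [countDvd]
  · refine Nat.count_iff_forall_not.mpr fun y _ hy => hr ?_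
    have hmod : (q * y + r : ℤ) ≡ r [ZMOD q] := by simp [Int.modEq_iff_dvd]
    push_cast at hy
    exact (hmod.eval f).dvd_iff.mp ((dvd_pow_self _ k.succ_ne_zero).trans hy)

theorem aeval_natCast_eq_zero_iff (f : ℤ[X]) (n k : ℕ) :
    aeval (k : ZMod n) f = 0 ↔ (n : ℤ) ∣ f.eval k := by
  rw [← ZMod.intCast_zmod_eq_zero_iff_dvd, ← map_natCast (algebraMap ℤ (ZMod n)),
    aeval_algebraMap_apply_eq_algebraMap_eval]
  simp

theorem natCard_aeval_eq_zero_eq_countDvd (f : ℤ[X]) (n : ℕ) [NeZero n] :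
    Nat.card {x : ZMod n // aeval x f = 0} = countDvd f.eval n n := by
  rw [Nat.card_eq_fintype_card, Fintype.card_subtype, countDvd, Nat.count_eq_card_filter_range]
  refine card_nbij' ZMod.val (fun k => k) (fun x hx => ?_) (fun k hk => ?_)
    (fun x _ => ZMod.natCast_zmod_val x) (fun k hk => ZMod.val_natCast_of_lt ?_)
  · simp only [coe_filter, Set.mem_ofPred_eq, mem_univ, true_and] at hx
    simp only [coe_filter, Set.mem_ofPred_eq, mem_range, ZMod.val_lt, true_and]
    rwa [← aeval_natCast_eq_zero_iff, ZMod.natCast_zmod_val]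
  · simp only [coe_filter, Set.mem_ofPred_eq, mem_range] at hk
    simpa [aeval_natCast_eq_zero_iff] using hk.2
  · simp only [coe_filter, Set.mem_ofPred_eq, mem_range] at hk
    exact hk.1

theorem Int.gcd_natCast_pow_add_pow_mul (p m j : ℕ) (d : ℤ) :
    Int.gcd ((p : ℤ) ^ (m + j)) ((p : ℤ) ^ m * d) = p ^ m * Int.gcd ((p : ℤ) ^ j) d := by
  rw [pow_add, Int.gcd_mul_left, Int.natAbs_pow, Int.natAbs_natCast]

namespace Cubic

section Taylor

variable {R S : Type*} [CommRing R] [CommRing S] (P : Cubic R) (r : R)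

theorem zero_eq_mk : (0 : Cubic R) = ⟨0, 0, 0, 0⟩ := rfl

def taylor : Cubic R :=
  ⟨P.a, 3 * P.a * r + P.b, 3 * P.a * r ^ 2 + 2 * P.b * r + P.c,
    P.a * r ^ 3 + P.b * r ^ 2 + P.c * r + P.d⟩

theorem eval_toPoly (x : R) : P.toPoly.eval x = P.a * x ^ 3 + P.b * x ^ 2 + P.c * x + P.d := by
  simp [toPoly]

theorem eval_taylor (x : R) : (P.taylor r).toPoly.eval x = P.toPoly.eval (x + r) := by
  simp only [eval_toPoly, taylor]; ring

theorem discr_taylor : (P.taylor r).discr = P.discr := by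
  simp only [discr, taylor]; ring

theorem taylor_taylor_neg : (P.taylor r).taylor (-r) = P := by
  ext <;> simp only [taylor] <;> ring

theorem map_taylor (φ : R →+* S) : (P.taylor r).map φ = (P.map φ).taylor (φ r) := by
  simp [taylor, map, map_ofNat]

theorem map_taylor_ne_zero {φ : R →+* S} (h : P.map φ ≠ 0) : (P.taylor r).map φ ≠ 0 := by
  intro h0
  apply h
  rw [← P.taylor_taylor_neg r, map_taylor, h0]
  ext <;> simp [taylor, zero_eq_mk]

end Taylor

theorem map_intCast_eq_zero_iff (P : Cubic ℤ) (p : ℕ) :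
    P.map (Int.castRingHom (ZMod p)) = 0 ↔
      (p : ℤ) ∣ P.a ∧ (p : ℤ) ∣ P.b ∧ (p : ℤ) ∣ P.c ∧ (p : ℤ) ∣ P.d := by
  simp only [Cubic.ext_iff, map, zero_eq_mk, Int.coe_castRingHom, ZMod.intCast_zmod_eq_zero_iff_dvd]

def rootCount (P : Cubic ℤ) (n : ℕ) : ℕ := countDvd P.toPoly.eval n n

def liftCount (P : Cubic ℤ) (p k : ℕ) : ℕ :=
  countDvd (fun y => P.toPoly.eval (p * y)) (p ^ (k + 1)) (p ^ k)

variable {p : ℕ} (T : Cubic ℤ)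

theorem rootCount_one (P : Cubic ℤ) : P.rootCount 1 = 1 := by
  simp [rootCount, countDvd]

theorem rootCount_pow_succ (P : Cubic ℤ) (k : ℕ) :
    P.rootCount (p ^ (k + 1)) = ∑ r ∈ (range p).filter (fun r : ℕ => (p : ℤ) ∣ P.toPoly.eval r),
      (P.taylor r).liftCount p k := by
  simp only [rootCount, liftCount, eval_taylor]
  exact countDvd_pow_succ_eq_sum _ _ _

theorem card_filter_dvd_eval_le_three [Fact p.Prime] {P : Cubic ℤ}
    (hP : P.map (Int.castRingHom (ZMod p)) ≠ 0) :
    ((range p).filter (fun r : ℕ => (p : ℤ) ∣ P.toPoly.eval r)).card ≤ 3 := by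
  rw [← Nat.count_eq_card_filter_range]
  change countDvd P.toPoly.eval p p ≤ 3
  rw [← natCard_aeval_eq_zero_eq_countDvd]
  have hP' : (P.map (Int.castRingHom (ZMod p))).toPoly ≠ 0 := (toPoly_eq_zero_iff _).not.mpr hP
  calc Nat.card {x : ZMod p // aeval x P.toPoly = 0}
      = Nat.card (P.map (Int.castRingHom (ZMod p))).roots.toFinset :=
        Nat.card_congr <| Equiv.subtypeEquivRight fun x => by
          rw [Multiset.mem_toFinset, roots, mem_roots hP', IsRoot, map_toPoly, eval_map,
            aeval_def, algebraMap_int_eq]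
    _ ≤ 3 := by
        rw [Nat.card_eq_fintype_card, Fintype.card_coe]
        exact card_roots_le

theorem liftCount_le (k : ℕ) : T.liftCount p k ≤ p ^ k := Nat.count_le _

theorem liftCount_le_one_of_not_dvd (hp : p.Prime) (hc : ¬ (p : ℤ) ∣ T.c) (k : ℕ) :
    T.liftCount p k ≤ 1 := by
  rw [liftCount, countDvd, Nat.count_eq_card_filter_range, card_le_one]
  intro y hy y' hy'
  simp only [mem_filter, mem_range] at hy hy'
  set W : ℤ := p ^ 2 * T.a * (y ^ 2 + y * y' + y' ^ 2) + p * T.b * (y + y') + T.c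
  have hdiff : T.toPoly.eval ((p : ℤ) * y) - T.toPoly.eval ((p : ℤ) * y') =
      p * ((y - y') * W) := by
    simp only [W, eval_toPoly]; ring
  have hW : IsCoprime ((p : ℤ) ^ k) W := by
    refine IsCoprime.pow_left
      ((Nat.prime_iff_prime_int.mp hp).coprime_iff_not_dvd.mpr fun h => hc ?_)
    have : W = T.c + p * (p * T.a * (y ^ 2 + y * y' + y' ^ 2) + T.b * (y + y')) := by ring
    exact (dvd_add_left (dvd_mul_right _ _)).mp (this ▸ h)
  have hdvd : (p : ℤ) ^ k ∣ (y - y') * W := by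
    have h := dvd_sub hy.2 hy'.2
    rw [hdiff, Nat.cast_pow, pow_succ'] at h
    exact (mul_dvd_mul_iff_left (by exact_mod_cast hp.ne_zero)).mp h
  refine (Nat.ModEq.eq_of_lt_of_lt (Nat.modEq_iff_dvd.mpr ?_) hy'.1 hy.1).symm
  exact_mod_cast hW.dvd_of_dvd_mul_right hdvd

theorem liftCount_succ_eq_zero (hc : (p : ℤ) ∣ T.c) (hd : ¬ (p : ℤ) ^ 2 ∣ T.d) (k : ℕ) :
    T.liftCount p (k + 1) = 0 := by
  refine Nat.count_iff_forall_not.mpr fun y _ hy => hd ?_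
  obtain ⟨c', hc'⟩ := hc
  have h : T.toPoly.eval ((p : ℤ) * y) =
      p ^ 2 * (p * T.a * y ^ 3 + T.b * y ^ 2 + c' * y) + T.d := by
    rw [eval_toPoly, hc']; ring
  have h2 : (p : ℤ) ^ 2 ∣ T.toPoly.eval ((p : ℤ) * y) :=
    (pow_dvd_pow _ (by omega : 2 ≤ k + 2)).trans (by exact_mod_cast hy)
  rw [h] at h2
  exact (dvd_add_right (dvd_mul_right _ _)).mp h2

theorem liftCount_succ_eq_of_dvd_two (hp : p ≠ 0) {c' d' : ℤ} (hc : T.c = p * c')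
    (hd : T.d = p ^ 2 * d') (k : ℕ) :
    T.liftCount p (k + 1) = p * (⟨p * T.a, T.b, c', d'⟩ : Cubic ℤ).rootCount (p ^ k) := by
  have heval : (fun y : ℤ => T.toPoly.eval (p * y)) =
      fun y => ((p ^ 2 : ℕ) : ℤ) * (⟨p * T.a, T.b, c', d'⟩ : Cubic ℤ).toPoly.eval y := by
    ext y; simp only [eval_toPoly, hc, hd]; push_cast; ring
  rw [liftCount, heval, show p ^ (k + 1 + 1) = p ^ 2 * p ^ k by ring,
    show p ^ (k + 1) = p * p ^ k by ring, countDvd_const_mul _ (pow_ne_zero 2 hp),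
    countDvd_mul_eval, rootCount]

theorem liftCount_add_two_eq_of_dvd_three (hp : p ≠ 0) {b' c' d' : ℤ} (hb : T.b = p * b')
    (hc : T.c = p ^ 2 * c') (hd : T.d = p ^ 3 * d') (k : ℕ) :
    T.liftCount p (k + 2) = p ^ 2 * (⟨T.a, b', c', d'⟩ : Cubic ℤ).rootCount (p ^ k) := by
  have heval : (fun y : ℤ => T.toPoly.eval (p * y)) =
      fun y => ((p ^ 3 : ℕ) : ℤ) * (⟨T.a, b', c', d'⟩ : Cubic ℤ).toPoly.eval y := by
    ext y; simp only [eval_toPoly, hb, hc, hd]; push_cast; ring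
  rw [liftCount, heval, show p ^ (k + 2 + 1) = p ^ 3 * p ^ k by ring,
    show p ^ (k + 2) = p ^ 2 * p ^ k by ring, countDvd_const_mul _ (pow_ne_zero 3 hp),
    countDvd_mul_eval, rootCount]

theorem liftCount_succ_cube_le_of_dvd_two (hp : p ≠ 0) {c' d' : ℤ} (hc : T.c = p * c')
    (hd : T.d = p ^ 2 * d') (k : ℕ)
    (hQ : (⟨p * T.a, T.b, c', d'⟩ : Cubic ℤ).rootCount (p ^ k) ^ 3 ≤
      27 ^ k * Int.gcd ((p : ℤ) ^ k) (⟨p * T.a, T.b, c', d'⟩ : Cubic ℤ).discr ^ 2) :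
    T.liftCount p (k + 1) ^ 3 ≤ 27 ^ (k + 1) * Int.gcd ((p : ℤ) ^ (k + 2)) T.discr ^ 2 := by
  have hdiscr : T.discr = p ^ 2 * (⟨p * T.a, T.b, c', d'⟩ : Cubic ℤ).discr := by
    simp only [discr, hc, hd]; ring
  rw [T.liftCount_succ_eq_of_dvd_two hp hc hd, hdiscr, show k + 2 = 2 + k from add_comm k 2,
    Int.gcd_natCast_pow_add_pow_mul]
  set N := (⟨p * T.a, T.b, c', d'⟩ : Cubic ℤ).rootCount (p ^ k)
  set g := Int.gcd ((p : ℤ) ^ k) (⟨p * T.a, T.b, c', d'⟩ : Cubic ℤ).discr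
  calc (p * N) ^ 3 = p ^ 3 * N ^ 3 := by ring
    _ ≤ p ^ 4 * (27 ^ k * g ^ 2) :=
        Nat.mul_le_mul (Nat.pow_le_pow_right (Nat.pos_of_ne_zero hp) (by norm_num)) hQ
    _ ≤ 27 ^ (k + 1) * (p ^ 2 * g) ^ 2 := by
        rw [mul_pow, ← pow_mul, mul_left_comm]
        gcongr <;> norm_num

theorem liftCount_succ_cube_le_of_dvd_three (hp : p ≠ 0) {b' c' d' : ℤ} (hb : T.b = p * b')
    (hc : T.c = p ^ 2 * c') (hd : T.d = p ^ 3 * d') (k : ℕ)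
    (hQ : ∀ j < k, (⟨T.a, b', c', d'⟩ : Cubic ℤ).rootCount (p ^ j) ^ 3 ≤
      27 ^ j * Int.gcd ((p : ℤ) ^ j) (⟨T.a, b', c', d'⟩ : Cubic ℤ).discr ^ 2) :
    T.liftCount p (k + 1) ^ 3 ≤ 27 ^ (k + 1) * Int.gcd ((p : ℤ) ^ (k + 2)) T.discr ^ 2 := by
  set D := (⟨T.a, b', c', d'⟩ : Cubic ℤ).discr
  have hdiscr : T.discr = p ^ 6 * D := by
    simp only [D, discr, hb, hc, hd]; ring
  rcases k with _ | k
  · have hgcd : Int.gcd ((p : ℤ) ^ 2) T.discr = p ^ 2 := by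
      have h := Int.gcd_eq_left (by positivity : (0 : ℤ) ≤ p ^ 2)
        (Dvd.intro (p ^ 4 * D) (by rw [hdiscr]; ring) : (p : ℤ) ^ 2 ∣ T.discr)
      exact_mod_cast h
    calc T.liftCount p 1 ^ 3 ≤ (p ^ 1) ^ 3 := Nat.pow_le_pow_left (T.liftCount_le 1) 3
      _ ≤ 27 ^ 1 * (p ^ 2) ^ 2 := by
          rw [← pow_mul, ← pow_mul]
          exact (Nat.pow_le_pow_right (Nat.pos_of_ne_zero hp) (by norm_num)).trans
            (Nat.le_mul_of_pos_left _ (by norm_num))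
      _ = _ := by rw [hgcd]
  have hmono : Int.gcd ((p : ℤ) ^ (3 + k)) (p ^ 3 * D) ≤ Int.gcd ((p : ℤ) ^ (k + 3)) T.discr := by
    refine Nat.le_of_dvd (Int.gcd_pos_of_ne_zero_left _ (by positivity)) ?_
    rw [hdiscr, add_comm k, show (p : ℤ) ^ 6 * D = p ^ 3 * (p ^ 3 * D) by ring]
    exact Int.gcd_dvd_gcd_mul_left_right _ _ _
  rw [T.liftCount_add_two_eq_of_dvd_three hp hb hc hd]
  set N := (⟨T.a, b', c', d'⟩ : Cubic ℤ).rootCount (p ^ k)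
  calc (p ^ 2 * N) ^ 3 = p ^ 6 * N ^ 3 := by ring
    _ ≤ p ^ 6 * (27 ^ k * Int.gcd ((p : ℤ) ^ k) D ^ 2) := by gcongr; exact hQ k (by omega)
    _ = 27 ^ k * Int.gcd ((p : ℤ) ^ (3 + k)) (p ^ 3 * D) ^ 2 := by
        rw [Int.gcd_natCast_pow_add_pow_mul]; ring
    _ ≤ 27 ^ (k + 2) * Int.gcd ((p : ℤ) ^ (k + 3)) T.discr ^ 2 := by
        gcongr <;> norm_num

theorem liftCount_cube_le (hp : p.Prime)
    (hT : T.map (Int.castRingHom (ZMod p)) ≠ 0) (k : ℕ)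
    (ih : ∀ j < k, ∀ Q : Cubic ℤ, Q.map (Int.castRingHom (ZMod p)) ≠ 0 →
      Q.rootCount (p ^ j) ^ 3 ≤ 27 ^ j * Int.gcd ((p : ℤ) ^ j) Q.discr ^ 2) :
    T.liftCount p k ^ 3 ≤ 27 ^ k * Int.gcd ((p : ℤ) ^ (k + 1)) T.discr ^ 2 := by
  have of_le_one (h : T.liftCount p k ≤ 1) :
      T.liftCount p k ^ 3 ≤ 27 ^ k * Int.gcd ((p : ℤ) ^ (k + 1)) T.discr ^ 2 := by
    have hg : 0 < Int.gcd ((p : ℤ) ^ (k + 1)) T.discr :=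
      Int.gcd_pos_of_ne_zero_left _ (pow_ne_zero _ (by exact_mod_cast hp.ne_zero))
    calc T.liftCount p k ^ 3 ≤ 1 := pow_le_one₀ (Nat.zero_le _) h
      _ ≤ _ := Nat.one_le_iff_ne_zero.mpr (by positivity)
  rcases k with _ | k
  · exact of_le_one (by simpa using T.liftCount_le 0)
  by_cases hc : (p : ℤ) ∣ T.c
  swap
  · exact of_le_one (T.liftCount_le_one_of_not_dvd hp hc _)
  by_cases hd : (p : ℤ) ^ 2 ∣ T.d
  swap
  · exact of_le_one ((T.liftCount_succ_eq_zero hc hd k).trans_le zero_le_one)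
  obtain ⟨c', hc'⟩ := hc
  obtain ⟨d', hd'⟩ := hd
  by_cases hQ : (⟨p * T.a, T.b, c', d'⟩ : Cubic ℤ).map (Int.castRingHom (ZMod p)) = 0
  · obtain ⟨-, ⟨b', hb'⟩, ⟨c'', rfl⟩, ⟨d'', rfl⟩⟩ := (map_intCast_eq_zero_iff _ _).mp hQ
    have hQ' : (⟨T.a, b', c'', d''⟩ : Cubic ℤ).map (Int.castRingHom (ZMod p)) ≠ 0 := by
      rw [Ne, map_intCast_eq_zero_iff]
      rintro ⟨ha, -⟩
      exact hT ((map_intCast_eq_zero_iff _ _).mpr ⟨ha, hb' ▸ dvd_mul_right _ _,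
        hc' ▸ dvd_mul_right _ _, hd' ▸ (dvd_pow_self _ two_ne_zero).mul_right _⟩)
    exact T.liftCount_succ_cube_le_of_dvd_three hp.ne_zero hb' (by rw [hc']; ring)
      (by rw [hd']; ring) k fun j hj => ih j (by omega) _ hQ'
  · exact T.liftCount_succ_cube_le_of_dvd_two hp.ne_zero hc' hd' k (ih k (by omega) _ hQ)

theorem rootCount_pow_cube_le (hp : p.Prime) (k : ℕ) (P : Cubic ℤ)
    (hP : P.map (Int.castRingHom (ZMod p)) ≠ 0) :
    P.rootCount (p ^ k) ^ 3 ≤ 27 ^ k * Int.gcd ((p : ℤ) ^ k) P.discr ^ 2 := by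
  have := Fact.mk hp
  induction k using Nat.strong_induction_on generalizing P with
  | _ k ih =>
  rcases k with _ | k
  · simp [rootCount_one]
  set R := (range p).filter (fun r : ℕ => (p : ℤ) ∣ P.toPoly.eval r)
  have hlift : ∀ r ∈ R, (P.taylor r).liftCount p k ^ 3 ≤
      27 ^ k * Int.gcd ((p : ℤ) ^ (k + 1)) P.discr ^ 2 := fun r _ => by
    simpa only [discr_taylor] using (P.taylor r).liftCount_cube_le hp (P.map_taylor_ne_zero r hP) k
      fun j hj => ih j (by omega)
  rw [rootCount_pow_succ]
  calc (∑ r ∈ R, (P.taylor r).liftCount p k) ^ 3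
      ≤ R.card ^ 2 * ∑ r ∈ R, (P.taylor r).liftCount p k ^ 3 :=
        pow_sum_le_card_mul_sum_pow (fun _ _ => Nat.zero_le _) 2
    _ ≤ R.card ^ 2 * (R.card * (27 ^ k * Int.gcd ((p : ℤ) ^ (k + 1)) P.discr ^ 2)) := by
        gcongr
        exact sum_le_card_nsmul _ _ _ hlift
    _ ≤ 3 ^ 3 * (27 ^ k * Int.gcd ((p : ℤ) ^ (k + 1)) P.discr ^ 2) := by
        rw [← mul_assoc, ← pow_succ]
        gcongr
        exact card_filter_dvd_eval_le_three hP
    _ = 27 ^ (k + 1) * Int.gcd ((p : ℤ) ^ (k + 1)) P.discr ^ 2 := by ring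

end Cubic

theorem le_mul_rpow_two_thirds_of_pow_three_le {x c g : ℝ} (hc : 0 ≤ c) (hg : 0 ≤ g)
    (h : x ^ 3 ≤ c ^ 3 * g ^ 2) : x ≤ c * g ^ ((2 : ℝ) / 3) := by
  refine le_of_pow_le_pow_left₀ three_ne_zero (by positivity) ?_
  rwa [mul_pow, ← Real.rpow_natCast (g ^ _), ← Real.rpow_mul hg, show (2 : ℝ) / 3 * (3 : ℕ) = 2 by
    norm_num, Real.rpow_two]

theorem Nat.three_pow_le_three_mul_succ_pow (k : ℕ) : 3 ^ k ≤ 3 * (k + 1) ^ (k - 1) := by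
  rcases k with _ | k
  · norm_num
  rw [pow_succ', Nat.add_sub_cancel]
  refine Nat.mul_le_mul_left 3 ?_
  rcases k with _ | k
  · simp
  exact Nat.pow_le_pow_left (by omega) _

/-- There is an absolute `C > 0` such that for every cubic `f ∈ ℤ[X]` and
prime `p` not dividing all coefficients of `f`, and every `k ≥ 1`:
`#{x ∈ ℤ/p^kℤ : f(x) ≡ 0 (mod p^k)} ≤ C (k+1)^{k−1} gcd(p^k, Disc(f))^{2/3}`, where
`Disc(aX³+bX²+cX+d) = b²c² − 4ac³ − 4b³d − 27a²d² + 18abcd`. -/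
theorem cubic_roots_mod_prime_power_bound :
    ∃ C > (0:ℝ), ∀ f : Polynomial ℤ, f.natDegree = 3 →
      ∀ p : ℕ, p.Prime → ¬ (∀ i, (p : ℤ) ∣ f.coeff i) → ∀ k : ℕ, 1 ≤ k →
        (Nat.card {x : ZMod (p ^ k) // Polynomial.aeval x f = 0} : ℝ)
          ≤ C * ((k : ℝ) + 1) ^ (k - 1) *
            ((Int.gcd ((p : ℤ) ^ k)
                (f.coeff 2 ^ 2 * f.coeff 1 ^ 2 - 4 * f.coeff 3 * f.coeff 1 ^ 3
                  - 4 * f.coeff 2 ^ 3 * f.coeff 0 - 27 * f.coeff 3 ^ 2 * f.coeff 0 ^ 2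
                  + 18 * f.coeff 3 * f.coeff 2 * f.coeff 1 * f.coeff 0) : ℝ)) ^ ((2:ℝ)/3) := by
  refine ⟨3, by norm_num, fun f hf p hp hcoeff k _ => ?_⟩
  set P : Cubic ℤ := Cubic.equiv.symm ⟨f, degree_le_of_natDegree_le hf.le⟩
  have hPf : P.toPoly = f := congrArg Subtype.val (Cubic.equiv.apply_symm_apply _)
  have hP : P.map (Int.castRingHom (ZMod p)) ≠ 0 := fun h => hcoeff fun i => by
    rw [← ZMod.intCast_zmod_eq_zero_iff_dvd, ← hPf, ← eq_intCast (Int.castRingHom _),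
      ← coeff_map, ← Cubic.map_toPoly, h, Cubic.zero, coeff_zero]
  have : NeZero p := ⟨hp.ne_zero⟩
  have hcard : Nat.card {x : ZMod (p ^ k) // aeval x f = 0} = P.rootCount (p ^ k) := by
    rw [← hPf]; exact natCard_aeval_eq_zero_eq_countDvd _ _
  have hbound : (P.rootCount (p ^ k) : ℝ) ^ 3 ≤
      ((3 : ℝ) ^ k) ^ 3 * (Int.gcd ((p : ℤ) ^ k) P.discr : ℝ) ^ 2 := by
    rw [← pow_mul, mul_comm k, pow_mul]
    exact_mod_cast Cubic.rootCount_pow_cube_le hp k P hP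
  rw [hcard]
  calc (P.rootCount (p ^ k) : ℝ)
      ≤ 3 ^ k * (Int.gcd ((p : ℤ) ^ k) P.discr : ℝ) ^ ((2 : ℝ) / 3) :=
        le_mul_rpow_two_thirds_of_pow_three_le (by positivity) (by positivity) hbound
    _ ≤ 3 * ((k : ℝ) + 1) ^ (k - 1) * (Int.gcd ((p : ℤ) ^ k) P.discr : ℝ) ^ ((2 : ℝ) / 3) := by
        gcongr
        exact_mod_cast Nat.three_pow_le_three_mul_succ_pow k

end
end

section
/- Let f = n₃X³ + n₂X² + n₁X + n₀ ∈ ℤ[X] with n₃ ≠ 0 be irreducible over ℚ, and let k = ℚ[X]/(f) be the cubic number field it generates. Then the discriminant of the number field k divides n₃²·Disc(f). -/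
/-!
Since `f` is irreducible of degree 3, `r` has degree 3 and `1, θ, θ²` with `θ = n₃ r` is a
`ℚ`-basis of `k`. By the leading-coefficient trick `θ` is an algebraic integer; it is a root of
`X³ + n₂X² + n₁n₃X + n₀n₃²`, whose discriminant is `n₃² Disc(f)`, and computing the trace form on
the basis through the companion matrix shows that this is the discriminant of the basis. A basis
of algebraic integers is an integral matrix times an integral basis of `k`, so its discriminant
is `disc(k)` times a square.
-/

open Polynomial

namespace Algebra

variable {K L : Type*} [CommRing K] [CommRing L] [Algebra K L]

theorem leftMulMatrix_of_basis_pow_of_cubic (b : Module.Basis (Fin 3) K L) {θ : L}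
    (hb : ∀ i, b i = θ ^ (i : ℕ)) {a₀ a₁ a₂ : K}
    (hθ : θ ^ 3 + algebraMap K L a₂ * θ ^ 2 + algebraMap K L a₁ * θ + algebraMap K L a₀ = 0) :
    leftMulMatrix b θ = !![0, 0, -a₀; 1, 0, -a₁; 0, 1, -a₂] := by
  have hb0 : b 0 = 1 := by simp [hb]
  have hb1 : b 1 = θ := by simp [hb]
  have hb2 : b 2 = θ ^ 2 := by simp [hb]
  have hθb : ∀ j : Fin 3, θ * b j = ![b 1, b 2, (-a₀) • b 0 + (-a₁) • b 1 + (-a₂) • b 2] j := by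
    intro j
    fin_cases j
    · simp [hb0, hb1]
    · simp [hb1, hb2, pow_two]
    · simp only [Fin.reduceFinMk, Fin.isValue, Matrix.cons_val, hb0, hb1, hb2, smul_def, map_neg,
        mul_one, neg_mul]
      linear_combination hθ
  ext i j
  rw [leftMulMatrix_eq_repr_mul, hθb]
  fin_cases i <;> fin_cases j <;> simp

theorem discr_of_basis_pow_of_cubic (b : Module.Basis (Fin 3) K L) {θ : L}
    (hb : ∀ i, b i = θ ^ (i : ℕ)) {a₀ a₁ a₂ : K}
    (hθ : θ ^ 3 + algebraMap K L a₂ * θ ^ 2 + algebraMap K L a₁ * θ + algebraMap K L a₀ = 0) :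
    discr K b = a₁ ^ 2 * a₂ ^ 2 - 4 * a₁ ^ 3 - 4 * a₀ * a₂ ^ 3 - 27 * a₀ ^ 2 + 18 * a₀ * a₁ * a₂ := by
  have htrace : ∀ i j, traceMatrix K b i j =
      Matrix.trace (!![0, 0, -a₀; 1, 0, -a₁; 0, 1, -a₂] ^ ((i : ℕ) + j)) := by
    intro i j
    rw [traceMatrix_apply, traceForm_apply, hb, hb, ← pow_add, trace_eq_matrix_trace b, map_pow,
      leftMulMatrix_of_basis_pow_of_cubic b hb hθ]
  rw [discr_def, Matrix.det_fin_three]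
  simp only [htrace]
  simp [pow_succ, Matrix.trace_fin_three]
  ring

end Algebra

namespace NumberField

variable {K : Type*} [Field K] [NumberField K]

theorem discr_dvd_of_isIntegral {ι : Type*} [Fintype ι] [DecidableEq ι] (b : Module.Basis ι ℚ K)
    (hb : ∀ i, IsIntegral ℤ (b i)) {N : ℤ} (hN : Algebra.discr ℚ b = N) : discr K ∣ N := by
  let b₀ := (integralBasis K).reindex ((integralBasis K).indexEquiv b)
  have hdet : IsIntegral ℤ (b₀.toMatrix b).det := IsIntegral.det fun i j => by
    obtain ⟨y, hy⟩ := IsIntegralClosure.isIntegral_iff (A := 𝓞 K).1 (hb j)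
    rw [Module.Basis.toMatrix_apply, Module.Basis.repr_reindex_apply, ← hy,
      integralBasis_repr_apply]
    exact isIntegral_algebraMap
  obtain ⟨d, hd⟩ := IsIntegrallyClosed.isIntegral_iff.1 hdet
  refine ⟨d ^ 2, Int.cast_injective (α := ℚ) ?_⟩
  rw [← hN, ← b₀.toMatrix_map_vecMul b, Algebra.discr_of_matrix_vecMul, ← hd,
    Module.Basis.coe_reindex, Algebra.discr_reindex, ← coe_discr]
  push_cast [eq_intCast]
  ring

end NumberField

theorem linearIndependent_smul_pow {K L : Type*} [Field K] [Ring L] [Algebra K L] (x : L) {c : K}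
    (hc : c ≠ 0) : LinearIndependent K fun i : Fin (minpoly K x).natDegree => (c • x) ^ (i : ℕ) := by
  convert (linearIndependent_pow x).units_smul fun i => Units.mk0 (c ^ (i : ℕ)) (pow_ne_zero _ hc)
    using 1
  ext i
  simp [_root_.smul_pow]

/-- Let `f = n₃X³ + n₂X² + n₁X + n₀ ∈ ℤ[X]` with `n₃ ≠ 0` be irreducible
over `ℚ`, and let `k` be the cubic number field it generates (a number field of degree `3`
containing a root of `f`).  Then the discriminant of `k` divides `n₃² · Disc(f)`. -/
theorem field_discr_dvd_cubic_disc (n₀ n₁ n₂ n₃ : ℤ) (hn₃ : n₃ ≠ 0)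
    (hirr : Irreducible
      (Polynomial.C (n₃ : ℚ) * Polynomial.X ^ 3 + Polynomial.C (n₂ : ℚ) * Polynomial.X ^ 2
        + Polynomial.C (n₁ : ℚ) * Polynomial.X + Polynomial.C (n₀ : ℚ)))
    (k : Type) [Field k] [NumberField k] (r : k)
    (hr : Polynomial.aeval r
      (Polynomial.C (n₃ : ℚ) * Polynomial.X ^ 3 + Polynomial.C (n₂ : ℚ) * Polynomial.X ^ 2
        + Polynomial.C (n₁ : ℚ) * Polynomial.X + Polynomial.C (n₀ : ℚ)) = 0)
    (hdeg : Module.finrank ℚ k = 3) :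
    (NumberField.discr k) ∣
      n₃ ^ 2 * (n₁ ^ 2 * n₂ ^ 2 - 4 * n₁ ^ 3 * n₃ - 4 * n₀ * n₂ ^ 3 - 27 * n₀ ^ 2 * n₃ ^ 2
        + 18 * n₀ * n₁ * n₂ * n₃) := by
  have hn₃' : (n₃ : ℚ) ≠ 0 := Int.cast_ne_zero.2 hn₃
  have hr₃ : (minpoly ℚ r).natDegree = 3 := by
    rw [← minpoly.eq_of_irreducible hirr hr, natDegree_mul_C (by simpa using hirr.ne_zero),
      natDegree_cubic hn₃']
  set θ := (n₃ : ℚ) • r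
  have hθint : IsIntegral ℤ θ := by
    have := isIntegral_leadingCoeff_smul (R := ℤ) (x := r)
      (C n₃ * X ^ 3 + C n₂ * X ^ 2 + C n₁ * X + C n₀) (by simpa using hr)
    rwa [leadingCoeff_cubic hn₃, ← Int.cast_smul_eq_zsmul ℚ] at this
  have hθ : θ ^ 3 + algebraMap ℚ k n₂ * θ ^ 2 + algebraMap ℚ k (n₁ * n₃) * θ
      + algebraMap ℚ k (n₀ * n₃ ^ 2) = 0 := by
    have hr' : (n₃ : k) * r ^ 3 + n₂ * r ^ 2 + n₁ * r + n₀ = 0 := by simpa using hr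
    simp only [θ, Algebra.smul_def, map_mul, map_pow, map_intCast]
    linear_combination (n₃ : k) ^ 2 * hr'
  let b := basisOfLinearIndependentOfCardEqFinrank (hr₃ ▸ linearIndependent_smul_pow r hn₃')
    (by simp [hdeg])
  have hb : ∀ i, b i = θ ^ (i : ℕ) := by simp [b, θ]
  refine NumberField.discr_dvd_of_isIntegral b (fun i => hb i ▸ hθint.pow _) ?_
  rw [Algebra.discr_of_basis_pow_of_cubic b hb hθ]
  push_cast
  ring
end
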